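/- arXiv:1204.0645 — 3 statements merged into one kernel-verified Lean document; each statement's English description precedes it below -/
import Mathlib

section
/- For vectors v_1,...,v_r in R^r and w_1,...,w_r in R^r, the Grassmann–Plücker relation holds: det(v_1,...,v_r)·det(w_1,...,w_r) = Σ_{s=1}^{r} det(w_s, v_2,...,v_r)·det(w_1,...,w_{s-1}, v_1, w_{s+1},...,w_r). -/
/-!
By Cramer's rule, applied to the transpose of `W`, the vector `det W • V i` is the combination
`∑ s, det (W with row s replaced by V i) • W s` of the rows of `W`. Substituting this for row `i`
of `V` and expanding the determinant linearly in that row gives the relation.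
-/

namespace Matrix

variable {n R : Type*} [Fintype n] [DecidableEq n] [CommRing R]

theorem det_smul_eq_sum_det_updateRow_smul (W : Matrix n n R) (x : n → R) :
    W.det • x = ∑ s, (W.updateRow s x).det • W s := by
  have cramer := mulVec_cramer Wᵀ x
  rw [det_transpose, mulVec_transpose, vecMul_eq_sum] at cramer
  simp only [← cramer, cramer_transpose_apply]

theorem det_updateRow_sum_smul {ι : Type*} (A : Matrix n n R) (i : n) (t : Finset ι)
    (c : ι → R) (u : ι → n → R) :
    (A.updateRow i (∑ s ∈ t, c s • u s)).det = ∑ s ∈ t, c s * (A.updateRow i (u s)).det := by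
  have row_linear :=
    map_sum (detRowAlternating.toMultilinearMap.toLinearMap A i) (fun s => c s • u s) t
  simp only [map_smul, smul_eq_mul] at row_linear
  exact row_linear

theorem det_mul_det_eq_sum_det_updateRow_mul_det_updateRow (V W : Matrix n n R) (i : n) :
    V.det * W.det = ∑ s, (V.updateRow i (W s)).det * (W.updateRow s (V i)).det := by
  calc V.det * W.det = (V.updateRow i (W.det • V i)).det := by
        rw [det_updateRow_smul, updateRow_eq_self, mul_comm]
    _ = ∑ s, (W.updateRow s (V i)).det * (V.updateRow i (W s)).det := by
        rw [det_smul_eq_sum_det_updateRow_smul]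
        exact det_updateRow_sum_smul V i _ _ _
    _ = _ := by simp only [mul_comm]

end Matrix

theorem grassmann_pluecker_relation (r : ℕ) [NeZero r] (v w : Fin r → Fin r → ℝ) :
    Matrix.det (Matrix.of fun a b => v b a) * Matrix.det (Matrix.of fun a b => w b a) =
      ∑ s : Fin r,
        Matrix.det (Matrix.of fun a b => Function.update v 0 (w s) b a) *
          Matrix.det (Matrix.of fun a b => Function.update w s (v 0) b a) := by
  change (Matrix.of v).transpose.det * (Matrix.of w).transpose.det =
    ∑ s, ((Matrix.of v).updateRow 0 (w s)).transpose.det *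
      ((Matrix.of w).updateRow s (v 0)).transpose.det
  simp only [Matrix.det_transpose]
  exact Matrix.det_mul_det_eq_sum_det_updateRow_mul_det_updateRow _ _ 0
end

section
/- Let v_1,...,v_r ∈ R^r and w_1,...,w_r ∈ R^r. If the r+1 products det(w_s,v_2,...,v_r)·det(w_1,...,w_{s-1},v_1,w_{s+1},...,w_r) are all nonnegative for s=1,...,r, then det(v_1,...,v_r)·det(w_1,...,w_r) ≥ 0. -/
/-! The identity `det V · det W = ∑ₜ det(V[v₁ := wₜ]) · det(W[wₜ := v₁])` holds over every
commutative ring: by Cramer's rule `det W · v₁ = ∑ₜ det(W[wₜ := v₁]) · wₜ`, and expanding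
`det(V[v₁ := det W · v₁])` by multilinearity gives the right-hand side. Over `ℝ` the
hypothesis makes every summand nonnegative. -/

namespace Matrix

variable {n R : Type*} [Fintype n] [DecidableEq n] [CommRing R]

theorem sum_det_updateRow_smul_eq_det_smul (B : Matrix n n R) (x : n → R) :
    ∑ t, (B.updateRow t x).det • B t = B.det • x := by
  simpa only [mulVec_transpose, vecMul_eq_sum, cramer_transpose_apply, det_transpose] using
    mulVec_cramer Bᵀ x

theorem det_mul_det_eq_sum_det_updateRow_mul (A B : Matrix n n R) (i : n) :
    A.det * B.det = ∑ t, (A.updateRow i (B t)).det * (B.updateRow t (A i)).det := by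
  calc A.det * B.det = (A.updateRow i (B.det • A i)).det := by
        rw [det_updateRow_smul, updateRow_eq_self, mul_comm]
    _ = (A.updateRow i (∑ t, (B.updateRow t (A i)).det • B t)).det := by
        rw [sum_det_updateRow_smul_eq_det_smul]
    _ = ∑ t, (B.updateRow t (A i)).det * (A.updateRow i (B t)).det := by
        simp only [← det_updateRow_smul]
        exact detRowAlternating.map_update_sum _ i _ A
    _ = _ := by simp only [mul_comm]

end Matrix

theorem grassmann_pluecker_sign_condition (r : ℕ) [NeZero r] (v w : Fin r → Fin r → ℝ)
    (h : ∀ s : Fin r,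
      0 ≤ Matrix.det (Matrix.of fun a b => Function.update v 0 (w s) b a) *
            Matrix.det (Matrix.of fun a b => Function.update w s (v 0) b a)) :
    0 ≤ Matrix.det (Matrix.of fun a b => v b a) * Matrix.det (Matrix.of fun a b => w b a) := by
  have hcols : ∀ u : Fin r → Fin r → ℝ,
      Matrix.det (Matrix.of fun a b => u b a) = (Matrix.of u).det := fun u =>
    Matrix.det_transpose (Matrix.of u)
  rw [hcols v, hcols w, Matrix.det_mul_det_eq_sum_det_updateRow_mul _ _ 0]
  refine Finset.sum_nonneg fun s _ => ?_
  have hs := h s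
  rwa [hcols (Function.update v 0 (w s)), hcols (Function.update w s (v 0))] at hs
end

section
/- Let b = (b_1,...,b_r) ∈ Λ(n,r) and suppose v_{b_1} = e_1, ..., v_{b_r} = e_r are the standard basis vectors of R^r, where the remaining v_i have entries that are variables. Then for any (i_1,...,i_r) ∈ Λ(n,r), the polynomial det(v_{i_1},...,v_{i_r}) in the variable entries has total degree equal to |{b_1,...,b_r} \ {i_1,...,i_r}|. -/
/-!
Column `s` of the minor is the standard basis vector `e m` when `t s = b m`, and a column of
fresh variables when `t s` is not among the `b m`. Each entry is therefore homogeneous of degree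
`0` or `1` according to its column, so by the Leibniz formula the determinant is homogeneous of
degree `#{s | t s ∉ range b}`. It is nonzero: choosing a permutation `τ` with `τ s = m` whenever
`t s = b m`, the specialisation `X (t s', τ s') ↦ 1`, all other variables `↦ 0`, turns the minor
into a permutation matrix.
-/

open scoped Classical in
/-- The matrix entries after fixing the basis `b` to the standard basis vectors:
column `b m` is the `m`-th standard basis vector, and all other entries are
independent polynomial variables. -/
noncomputable def basisFixedEntry (n r : ℕ) (b : Fin r → Fin n) (l : Fin n) (k : Fin r) :
    MvPolynomial (Fin n × Fin r) ℝ :=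
  if ∃ m, b m = l ∧ m = k then 1
  else if ∃ m, b m = l then 0
  else MvPolynomial.X (l, k)

open Finset MvPolynomial

theorem Matrix.isHomogeneous_det {n σ R : Type*} [Fintype n] [DecidableEq n] [CommRing R]
    (M : Matrix n n (MvPolynomial σ R)) (d : n → ℕ) (hM : ∀ i j, (M i j).IsHomogeneous (d j)) :
    M.det.IsHomogeneous (∑ j, d j) := by
  rw [M.det_apply]
  refine IsHomogeneous.sum _ _ _ fun τ _ => ?_
  rw [Units.smul_def, ← mem_homogeneousSubmodule]
  exact zsmul_mem
    ((mem_homogeneousSubmodule _ _).2 (IsHomogeneous.prod _ _ _ fun j _ => hM (τ j) j)) _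

theorem Equiv.Perm.exists_extending_of_injective_pair {ι α : Type*} [Finite ι] {b t : ι → α}
    (hb : b.Injective) (ht : t.Injective) : ∃ τ : Perm ι, ∀ m s, b m = t s → τ s = m := by
  obtain ⟨τ, hτ⟩ := Perm.exists_extending_pair (α := {p : ι × ι // b p.1 = t p.2})
    (fun p => p.1.2) (fun p => p.1.1)
    (fun p q h => Subtype.ext (Prod.ext (hb (by rw [p.2, q.2]; exact congrArg t h)) h))
    (fun p q h => Subtype.ext (Prod.ext h (ht (by rw [← p.2, ← q.2]; exact congrArg b h))))
  exact ⟨τ, fun m s h => hτ ⟨(m, s), h⟩⟩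

theorem Finset.card_filter_notMem_image_eq_card_sdiff {ι α : Type*} [Fintype ι] [DecidableEq α]
    {b t : ι → α} (hb : b.Injective) (ht : t.Injective) :
    #{s | t s ∉ univ.image b} = #(univ.image b \ univ.image t) := by
  rw [card_sdiff_comm (by rw [card_image_of_injective _ hb, card_image_of_injective _ ht]),
    sdiff_eq_filter, filter_image, card_image_of_injective _ ht]

section basisFixed

variable {n r : ℕ} {b : Fin r → Fin n}

theorem basisFixedEntry_apply_self (hb : b.Injective) (m k : Fin r) :
    basisFixedEntry n r b (b m) k = if m = k then 1 else 0 := by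
  simp [basisFixedEntry, hb.eq_iff, eq_comm]

theorem basisFixedEntry_of_notMem (l : Fin n) (hl : l ∉ univ.image b) (k : Fin r) :
    basisFixedEntry n r b l k = X (l, k) := by
  simp_all [basisFixedEntry]

theorem basisFixedEntry_isHomogeneous (l : Fin n) (k : Fin r) :
    (basisFixedEntry n r b l k).IsHomogeneous (if l ∈ univ.image b then 0 else 1) := by
  unfold basisFixedEntry
  split_ifs <;> simp_all [isHomogeneous_one, isHomogeneous_zero, isHomogeneous_X]

end basisFixed

noncomputable def basisFixedMinor (n r : ℕ) (b t : Fin r → Fin n) :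
    Matrix (Fin r) (Fin r) (MvPolynomial (Fin n × Fin r) ℝ) :=
  Matrix.of fun k s => basisFixedEntry n r b (t s) k

section basisFixedMinor

variable {n r : ℕ} {b t : Fin r → Fin n}

theorem basisFixedMinor_det_isHomogeneous :
    (basisFixedMinor n r b t).det.IsHomogeneous #{s | t s ∉ univ.image b} := by
  have h := Matrix.isHomogeneous_det (basisFixedMinor n r b t) _
    fun k s => basisFixedEntry_isHomogeneous (b := b) (t s) k
  simpa only [card_filter, ite_not] using h

theorem basisFixedMinor_det_ne_zero (hb : b.Injective) (ht : t.Injective) :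
    (basisFixedMinor n r b t).det ≠ 0 := by
  obtain ⟨τ, hτ⟩ := Equiv.Perm.exists_extending_of_injective_pair hb ht
  let x : Fin n × Fin r → ℝ := fun p => if p.1 = t (τ.symm p.2) then 1 else 0
  have hx : (basisFixedMinor n r b t).map (eval x) =
      (1 : Matrix (Fin r) (Fin r) ℝ).submatrix id τ := by
    ext k s
    simp only [basisFixedMinor, Matrix.map_apply, Matrix.of_apply, Matrix.submatrix_apply, id,
      Matrix.one_apply]
    by_cases hs : t s ∈ univ.image b
    · obtain ⟨m, -, hm⟩ := mem_image.1 hs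
      rw [← hm, basisFixedEntry_apply_self hb, hτ m s hm]
      simp only [apply_ite (eval x), map_one, map_zero, @eq_comm _ k]
    · rw [basisFixedEntry_of_notMem _ hs, eval_X]
      simp [x, ht.eq_iff, Equiv.eq_symm_apply, eq_comm]
  intro h
  have := congrArg (eval x) h
  rw [RingHom.map_det, RingHom.mapMatrix_apply, hx, Matrix.det_permute'] at this
  simp at this

end basisFixedMinor

theorem degree_of_determinant_after_basis_fix (n r : ℕ) (b : Fin r → Fin n)
    (hb : StrictMono b) (t : Fin r → Fin n) (ht : StrictMono t) :
    (Matrix.det (Matrix.of fun k s => basisFixedEntry n r b (t s) k)).totalDegree =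
      (Finset.image b Finset.univ \ Finset.image t Finset.univ).card := by
  rw [← card_filter_notMem_image_eq_card_sdiff hb.injective ht.injective]
  exact basisFixedMinor_det_isHomogeneous.totalDegree
    (basisFixedMinor_det_ne_zero hb.injective ht.injective)
end
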